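/- Let B be a complex unital Banach algebra, w₁ ≠ w₂ ∈ ℂ, and U₁, U₂ disjoint open neighborhoods of w₁ and w₂ respectively. Suppose R : (U₁ ∪ U₂) \ {w₁, w₂} → B satisfies the resolvent equation on (U₁ ∪ U₂) \ {w₁, w₂}, and that there are m, n ≥ 1, elements b₁, …, b_m ∈ B and c₁, …, c_n ∈ B, and holomorphic functions S₁ : U₁ → B, S₂ : U₂ → B with R(z) = Σ_{k=1}^{m} b_k·(z−w₁)^{−k} + S₁(z) for z ∈ U₁ \ {w₁} and R(z) = Σ_{l=1}^{n} c_l·(z−w₂)^{−l} + S₂(z) for z ∈ U₂ \ {w₂}. Then b_k·c_l = 0 for all 1 ≤ k ≤ m and 1 ≤ l ≤ n. -/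

import Mathlib

/-!
Extract the coefficients by Cauchy integrals over small circles `C₁` around `w₁` and `C₂` around
`w₂`: `2πi b_k = ∮_{C₁} (z - w₁)^(k-1) R z dz` and `2πi c_l = ∮_{C₂} (w - w₂)^(l-1) R w dw`.
The product of the two integrals is a double integral of `R z R w`, which the resolvent equation
turns into `(R z - R w) / (w - z)`. In the `R w` term the `z`-integrand is holomorphic inside
`C₁` (its only pole `z = w` lies outside), and in the `R z` term, after Fubini, the `w`-integrand
is holomorphic inside `C₂`; by Cauchy's theorem both vanish, so `(2πi)² b_k c_l = 0`.
-/

open Metric Complex Set Real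

def ResolventEq {B : Type*} [Ring B] [Algebra ℂ B] (S : Set ℂ) (R : ℂ → B) : Prop :=
  ∀ z₁ ∈ S, ∀ z₂ ∈ S, R z₁ - R z₂ = (z₂ - z₁) • (R z₁ * R z₂)

theorem sphere_subset_diff_singleton {α : Type*} [PseudoMetricSpace α] {c : α} {r : ℝ}
    {U : Set α} (hr : r ≠ 0) (hball : closedBall c r ⊆ U) : sphere c r ⊆ U \ {c} :=
  fun _ hz => ⟨hball (sphere_subset_closedBall hz), ne_of_mem_sphere hz hr⟩

theorem diff_singleton_subset_diff_pair {α : Type*} {U V : Set α} {a b : α}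
    (hUV : Disjoint U V) (hb : b ∈ V) : U \ {a} ⊆ (U ∪ V) \ {a, b} := by
  rintro z ⟨hzU, hza⟩
  refine ⟨Or.inl hzU, ?_⟩
  rintro (h | h)
  exacts [hza h, hUV.ne_of_mem hzU hb h]

theorem circleIntegral_sub_zpow (c : ℂ) {r : ℝ} (hr : r ≠ 0) (n : ℤ) :
    (∮ z in C(c, r), (z - c) ^ n) = if n = -1 then 2 * π * I else 0 := by
  split_ifs with hn
  · simpa [hn] using circleIntegral.integral_sub_center_inv c hr
  · exact circleIntegral.integral_sub_zpow_of_ne hn c c r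

theorem circleIntegral_mul_inv_sub_eq_zero {f : ℂ → ℂ} (hf : Differentiable ℂ f) {c a : ℂ}
    {r : ℝ} (hr : 0 ≤ r) (ha : a ∉ closedBall c r) : (∮ z in C(c, r), f z * (z - a)⁻¹) = 0 := by
  have hf' : DifferentiableOn ℂ (fun z => f z * (z - a)⁻¹) {a}ᶜ := by
    fun_prop (disch := intros; simp_all [sub_eq_zero])
  exact (hf'.diffContOnCl_ball fun z hz (h : z = a) => ha (h ▸ hz)).circleIntegral_eq_zero hr

theorem ContinuousLinearMap.circleIntegral_comp_comm {E F : Type*} [NormedAddCommGroup E]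
    [NormedSpace ℂ E] [CompleteSpace E] [NormedAddCommGroup F] [NormedSpace ℂ F]
    [CompleteSpace F] (L : E →L[ℂ] F) {f : ℂ → E} {c : ℂ} {r : ℝ}
    (hf : CircleIntegrable f c r) :
    (∮ z in C(c, r), L (f z)) = L (∮ z in C(c, r), f z) := by
  simp only [circleIntegral, ← L.map_smul]
  exact L.intervalIntegral_comp_comm hf.out

open MeasureTheory in
theorem circleIntegral_comm {E : Type*} [NormedAddCommGroup E] [NormedSpace ℂ E]
    {c₁ c₂ : ℂ} {r₁ r₂ : ℝ} (hr₁ : 0 ≤ r₁) (hr₂ : 0 ≤ r₂) {F : ℂ → ℂ → E}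
    (hF : ContinuousOn (Function.uncurry F) (sphere c₁ r₁ ×ˢ sphere c₂ r₂)) :
    (∮ w in C(c₂, r₂), ∮ z in C(c₁, r₁), F z w) = ∮ z in C(c₁, r₁), ∮ w in C(c₂, r₂), F z w := by
  let G : ℝ → ℝ → E := fun φ θ =>
    deriv (circleMap c₂ r₂) φ • deriv (circleMap c₁ r₁) θ •
      F (circleMap c₁ r₁ θ) (circleMap c₂ r₂ φ)
  have hG : Continuous (Function.uncurry G) := by
    have hF' := hF.comp_continuous
      (by fun_prop : Continuous fun p : ℝ × ℝ => (circleMap c₁ r₁ p.2, circleMap c₂ r₂ p.1))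
      fun p => ⟨circleMap_mem_sphere c₁ hr₁ _, circleMap_mem_sphere c₂ hr₂ _⟩
    simp only [G, Function.uncurry_def, deriv_circleMap]
    exact (by fun_prop : Continuous fun p : ℝ × ℝ => circleMap 0 r₂ p.1 * I).smul
      ((by fun_prop : Continuous fun p : ℝ × ℝ => circleMap 0 r₁ p.2 * I).smul hF')
  have hGint : Integrable (Function.uncurry G)
      ((volume.restrict (Ioc 0 (2 * π))).prod (volume.restrict (Ioc 0 (2 * π)))) := by
    rw [Measure.prod_restrict]
    exact (hG.continuousOn.integrableOn_compact (isCompact_Icc.prod isCompact_Icc)).mono_set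
      (prod_mono Ioc_subset_Icc_self Ioc_subset_Icc_self)
  simp only [circleIntegral, intervalIntegral.integral_of_le two_pi_pos.le, ← integral_smul]
  rw [integral_integral_swap hGint]
  simp only [G, smul_comm (deriv (circleMap c₂ r₂) _)]

section PrincipalPart

variable {E : Type*} [NormedAddCommGroup E] [NormedSpace ℂ E]

noncomputable def principalPart (c : ℂ) (m : ℕ) (b : ℕ → E) (z : ℂ) : E :=
  ∑ j ∈ Finset.Icc 1 m, ((z - c) ^ j)⁻¹ • b j

theorem continuousOn_principalPart (c : ℂ) (m : ℕ) (b : ℕ → E) :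
    ContinuousOn (principalPart c m b) {c}ᶜ := by
  unfold principalPart
  fun_prop (disch := intros; simp_all [sub_eq_zero])

theorem ContinuousOn.of_eqOn_principalPart_add {c : ℂ} {U : Set ℂ} {m : ℕ} {b : ℕ → E}
    {S R : ℂ → E} (hS : ContinuousOn S U) (hR : EqOn R (principalPart c m b + S) (U \ {c})) :
    ContinuousOn R (U \ {c}) :=
  (((continuousOn_principalPart c m b).mono fun _ hz => hz.2).add (hS.mono sdiff_subset)).congr hR

variable [CompleteSpace E]

theorem circleIntegral_sub_pow_smul_principalPart {c : ℂ} {r : ℝ} (hr : 0 < r) {m k : ℕ}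
    (b : ℕ → E) (hk : 1 ≤ k) (hkm : k ≤ m) :
    (∮ z in C(c, r), (z - c) ^ (k - 1) • principalPart c m b z) = (2 * π * I) • b k := by
  have hne : ∀ z ∈ sphere c r, z - c ≠ 0 := fun z hz =>
    sub_ne_zero.2 (ne_of_mem_sphere hz hr.ne')
  have hint : ∀ j ∈ Finset.Icc 1 m,
      CircleIntegrable (fun z => (z - c) ^ ((k : ℤ) - 1 - j) • b j) c r := fun j _ => by
    refine ContinuousOn.circleIntegrable hr.le (ContinuousOn.smul ?_ continuousOn_const)
    exact (continuousOn_id.sub continuousOn_const).zpow₀ _ fun z hz => Or.inl (hne z hz)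
  calc (∮ z in C(c, r), (z - c) ^ (k - 1) • principalPart c m b z)
      = ∮ z in C(c, r), ∑ j ∈ Finset.Icc 1 m, (z - c) ^ ((k : ℤ) - 1 - j) • b j := by
        refine circleIntegral.integral_congr hr.le fun z hz => ?_
        simp only [principalPart, Finset.smul_sum, smul_smul]
        refine Finset.sum_congr rfl fun j hj => ?_
        rw [← zpow_natCast, ← zpow_natCast, ← zpow_neg, ← zpow_add₀ (hne z hz)]
        congr 3
        omega
    _ = ∑ j ∈ Finset.Icc 1 m, (if (k : ℤ) - 1 - j = -1 then 2 * π * I else 0) • b j := by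
        simp only [circleIntegral.integral_fun_sum hint, circleIntegral.integral_smul_const,
          circleIntegral_sub_zpow c hr.ne']
    _ = (2 * π * I) • b k := by
        rw [Finset.sum_eq_single_of_mem k (Finset.mem_Icc.2 ⟨hk, hkm⟩)]
        · simp
        · intro j _ hjk
          rw [if_neg (by omega), zero_smul]

theorem circleIntegral_sub_pow_smul_eq_coeff {c : ℂ} {U : Set ℂ} {r : ℝ} (hr : 0 < r)
    (hball : closedBall c r ⊆ U) {m k : ℕ} {b : ℕ → E} {S R : ℂ → E}
    (hS : DifferentiableOn ℂ S U) (hR : EqOn R (principalPart c m b + S) (U \ {c}))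
    (hk : 1 ≤ k) (hkm : k ≤ m) :
    (∮ z in C(c, r), (z - c) ^ (k - 1) • R z) = (2 * π * I) • b k := by
  have hsphere := sphere_subset_diff_singleton hr.ne' hball
  have hP : CircleIntegrable (fun z => (z - c) ^ (k - 1) • principalPart c m b z) c r :=
    ((continuous_id.sub continuous_const).pow _).continuousOn.smul
      ((continuousOn_principalPart c m b).mono fun z hz => (hsphere hz).2)
      |>.circleIntegrable hr.le
  have hS' : DifferentiableOn ℂ (fun z => (z - c) ^ (k - 1) • S z) U := by fun_prop
  calc (∮ z in C(c, r), (z - c) ^ (k - 1) • R z)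
      = ∮ z in C(c, r), (z - c) ^ (k - 1) • principalPart c m b z + (z - c) ^ (k - 1) • S z :=
        circleIntegral.integral_congr hr.le fun z hz => by
          simp only [hR (hsphere hz), Pi.add_apply, smul_add]
    _ = (2 * π * I) • b k := by
        rw [circleIntegral.integral_add hP
            ((hS'.continuousOn.mono (sphere_subset_closedBall.trans hball)).circleIntegrable hr.le),
          circleIntegral_sub_pow_smul_principalPart hr b hk hkm,
          (hS'.diffContOnCl_ball hball).circleIntegral_eq_zero hr.le, add_zero]

end PrincipalPart

section BanachAlgebra

variable {B : Type*} [NormedRing B] [NormedAlgebra ℂ B] [CompleteSpace B]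

theorem circleIntegral_mul_circleIntegral {f g : ℂ → B} {c₁ c₂ : ℂ} {r₁ r₂ : ℝ}
    (hf : CircleIntegrable f c₁ r₁) (hg : CircleIntegrable g c₂ r₂) :
    (∮ z in C(c₁, r₁), f z) * (∮ w in C(c₂, r₂), g w) =
      ∮ w in C(c₂, r₂), ∮ z in C(c₁, r₁), f z * g w := by
  calc (∮ z in C(c₁, r₁), f z) * (∮ w in C(c₂, r₂), g w)
      = ∮ w in C(c₂, r₂), (∮ z in C(c₁, r₁), f z) * g w :=
        ((ContinuousLinearMap.mul ℂ B _).circleIntegral_comp_comm hg).symm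
    _ = ∮ w in C(c₂, r₂), ∮ z in C(c₁, r₁), f z * g w := by
      congr 1 with w
      exact ((ContinuousLinearMap.mul ℂ B).flip (g w)).circleIntegral_comp_comm hf |>.symm

theorem circleIntegral_mul_circleIntegral_eq_zero_of_resolventEq {S : Set ℂ} {R : ℂ → B}
    (hres : ResolventEq S R) {c₁ c₂ : ℂ} {r₁ r₂ : ℝ} (hr₁ : 0 ≤ r₁) (hr₂ : 0 ≤ r₂)
    (hdisj : Disjoint (closedBall c₁ r₁) (closedBall c₂ r₂))
    (hS₁ : sphere c₁ r₁ ⊆ S) (hS₂ : sphere c₂ r₂ ⊆ S)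
    (hR₁ : ContinuousOn R (sphere c₁ r₁)) (hR₂ : ContinuousOn R (sphere c₂ r₂))
    {p q : ℂ → ℂ} (hp : Differentiable ℂ p) (hq : Differentiable ℂ q) :
    (∮ z in C(c₁, r₁), p z • R z) * (∮ w in C(c₂, r₂), q w • R w) = 0 := by
  have hne : ∀ z ∈ sphere c₁ r₁, ∀ w ∈ sphere c₂ r₂, z ≠ w := fun z hz w hw =>
    hdisj.ne_of_mem (sphere_subset_closedBall hz) (sphere_subset_closedBall hw)
  -- `R z R w = (R z - R w) / (w - z)`, split so that each kernel has its pole off the other circle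
  have hsplit : ∀ z ∈ sphere c₁ r₁, ∀ w ∈ sphere c₂ r₂, (p z • R z) * (q w • R w) =
      (p z * (z - w)⁻¹) • (q w • R w) + (q w * (w - z)⁻¹) • (p z • R z) := by
    intro z hz w hw
    have hwz : w - z ≠ 0 := sub_ne_zero.2 (hne z hz w hw).symm
    have hRR : R z * R w = (w - z)⁻¹ • (R z - R w) := by
      rw [hres z (hS₁ hz) w (hS₂ hw), inv_smul_smul₀ hwz]
    rw [smul_mul_smul, hRR, ← neg_sub w z, inv_neg]
    module
  have hcont : ContinuousOn (fun x : ℂ × ℂ => (q x.2 * (x.2 - x.1)⁻¹) • (p x.1 • R x.1))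
      (sphere c₁ r₁ ×ˢ sphere c₂ r₂) := by
    have hinv : ContinuousOn (fun x : ℂ × ℂ => (x.2 - x.1)⁻¹) (sphere c₁ r₁ ×ˢ sphere c₂ r₂) :=
      (continuousOn_snd.sub continuousOn_fst).inv₀ fun x hx =>
        sub_ne_zero.2 (hne _ hx.1 _ hx.2).symm
    exact ((hq.continuous.comp continuous_snd).continuousOn.mul hinv).smul
      ((hp.continuous.comp continuous_fst).continuousOn.smul
        (hR₁.comp continuousOn_fst mapsTo_fst_prod))
  have hpR : CircleIntegrable (fun z => p z • R z) c₁ r₁ :=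
    (hp.continuous.continuousOn.smul hR₁).circleIntegrable hr₁
  have hqR : CircleIntegrable (fun w => q w • R w) c₂ r₂ :=
    (hq.continuous.continuousOn.smul hR₂).circleIntegrable hr₂
  calc (∮ z in C(c₁, r₁), p z • R z) * (∮ w in C(c₂, r₂), q w • R w)
      = ∮ w in C(c₂, r₂), ∮ z in C(c₁, r₁), (p z • R z) * (q w • R w) :=
        circleIntegral_mul_circleIntegral hpR hqR
    _ = ∮ w in C(c₂, r₂), ∮ z in C(c₁, r₁), (q w * (w - z)⁻¹) • (p z • R z) := by
        refine circleIntegral.integral_congr hr₂ fun w hw => ?_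
        have hA : CircleIntegrable (fun z => (p z * (z - w)⁻¹) • (q w • R w)) c₁ r₁ :=
          ((hp.continuous.continuousOn.mul ((continuousOn_id.sub continuousOn_const).inv₀
            fun z hz => sub_ne_zero.2 (hne z hz w hw))).smul continuousOn_const).circleIntegrable
              hr₁
        have hB : CircleIntegrable (fun z => (q w * (w - z)⁻¹) • (p z • R z)) c₁ r₁ :=
          (hcont.comp (continuousOn_id.prodMk continuousOn_const) fun z hz => ⟨hz, hw⟩)
            |>.circleIntegrable hr₁
        rw [circleIntegral.integral_congr hr₁ fun z hz => hsplit z hz w hw,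
          circleIntegral.integral_add hA hB, circleIntegral.integral_smul_const,
          circleIntegral_mul_inv_sub_eq_zero hp hr₁
            (hdisj.notMem_of_mem_right (sphere_subset_closedBall hw)), zero_smul, zero_add]
    _ = ∮ z in C(c₁, r₁), ∮ w in C(c₂, r₂), (q w * (w - z)⁻¹) • (p z • R z) :=
        circleIntegral_comm hr₁ hr₂ hcont
    _ = ∮ _ in C(c₁, r₁), (0 : B) := by
        refine circleIntegral.integral_congr hr₁ fun z hz => ?_
        rw [circleIntegral.integral_smul_const, circleIntegral_mul_inv_sub_eq_zero hq hr₂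
          (hdisj.notMem_of_mem_left (sphere_subset_closedBall hz)), zero_smul]
    _ = 0 := by simp [circleIntegral]

end BanachAlgebra

theorem laurent_coeff_orthogonal_of_two_poles_general
    (B : Type*) [NormedRing B] [NormedAlgebra ℂ B] [CompleteSpace B]
    (w₁ w₂ : ℂ)
    (U₁ U₂ : Set ℂ) (hU₁ : IsOpen U₁) (hU₂ : IsOpen U₂)
    (hw₁ : w₁ ∈ U₁) (hw₂ : w₂ ∈ U₂) (hdisj : Disjoint U₁ U₂)
    (m n : ℕ)
    (b c : ℕ → B) (S₁ S₂ : ℂ → B)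
    (hS₁ : DifferentiableOn ℂ S₁ U₁) (hS₂ : DifferentiableOn ℂ S₂ U₂)
    (R : ℂ → B)
    (hres : ResolventEq ((U₁ ∪ U₂) \ {w₁, w₂}) R)
    (hR₁ : ∀ z ∈ U₁ \ {w₁},
      R z = (∑ k ∈ Finset.Icc 1 m, ((z - w₁) ^ k)⁻¹ • b k) + S₁ z)
    (hR₂ : ∀ z ∈ U₂ \ {w₂},
      R z = (∑ l ∈ Finset.Icc 1 n, ((z - w₂) ^ l)⁻¹ • c l) + S₂ z) :
    ∀ k, 1 ≤ k → k ≤ m → ∀ l, 1 ≤ l → l ≤ n → b k * c l = 0 := by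
  intro k hk hkm l hl hln
  obtain ⟨r₁, hr₁, hball₁⟩ := nhds_basis_closedBall.mem_iff.1 (hU₁.mem_nhds hw₁)
  obtain ⟨r₂, hr₂, hball₂⟩ := nhds_basis_closedBall.mem_iff.1 (hU₂.mem_nhds hw₂)
  have hsphere₁ := sphere_subset_diff_singleton hr₁.ne' hball₁
  have hsphere₂ := sphere_subset_diff_singleton hr₂.ne' hball₂
  have hdom₂ : U₂ \ {w₂} ⊆ (U₁ ∪ U₂) \ {w₁, w₂} :=
    (diff_singleton_subset_diff_pair hdisj.symm hw₁).trans (by rw [union_comm, pair_comm])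
  have hprod := circleIntegral_mul_circleIntegral_eq_zero_of_resolventEq hres hr₁.le hr₂.le
    (hdisj.mono hball₁ hball₂)
    (hsphere₁.trans (diff_singleton_subset_diff_pair hdisj hw₂)) (hsphere₂.trans hdom₂)
    ((hS₁.continuousOn.of_eqOn_principalPart_add hR₁).mono hsphere₁)
    ((hS₂.continuousOn.of_eqOn_principalPart_add hR₂).mono hsphere₂)
    (p := fun z => (z - w₁) ^ (k - 1)) (q := fun w => (w - w₂) ^ (l - 1)) (by fun_prop)
    (by fun_prop)
  rw [circleIntegral_sub_pow_smul_eq_coeff hr₁ hball₁ hS₁ hR₁ hk hkm,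
    circleIntegral_sub_pow_smul_eq_coeff hr₂ hball₂ hS₂ hR₂ hl hln, smul_mul_smul,
    smul_eq_zero] at hprod
  exact hprod.resolve_left (mul_ne_zero two_pi_I_ne_zero two_pi_I_ne_zero)

/-- If a function satisfying the resolvent equation has poles of finite
order at two distinct points `w₁ ≠ w₂`, with principal-part coefficients `b_k` at `w₁`
and `c_l` at `w₂`, then `b_k c_l = 0` for all `1 ≤ k ≤ m`, `1 ≤ l ≤ n`. -/
theorem laurent_coeff_orthogonal_of_two_poles
    (B : Type*) [NormedRing B] [NormedAlgebra ℂ B] [CompleteSpace B]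
    (w₁ w₂ : ℂ) (hw : w₁ ≠ w₂)
    (U₁ U₂ : Set ℂ) (hU₁ : IsOpen U₁) (hU₂ : IsOpen U₂)
    (hw₁ : w₁ ∈ U₁) (hw₂ : w₂ ∈ U₂) (hdisj : Disjoint U₁ U₂)
    (m n : ℕ) (hm : 1 ≤ m) (hn : 1 ≤ n)
    (b c : ℕ → B) (S₁ S₂ : ℂ → B)
    (hS₁ : DifferentiableOn ℂ S₁ U₁) (hS₂ : DifferentiableOn ℂ S₂ U₂)
    (R : ℂ → B)
    (hres : ResolventEq ((U₁ ∪ U₂) \ {w₁, w₂}) R)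
    (hR₁ : ∀ z ∈ U₁ \ {w₁},
      R z = (∑ k ∈ Finset.Icc 1 m, ((z - w₁) ^ k)⁻¹ • b k) + S₁ z)
    (hR₂ : ∀ z ∈ U₂ \ {w₂},
      R z = (∑ l ∈ Finset.Icc 1 n, ((z - w₂) ^ l)⁻¹ • c l) + S₂ z) :
    ∀ k, 1 ≤ k → k ≤ m → ∀ l, 1 ≤ l → l ≤ n → b k * c l = 0 :=
  laurent_coeff_orthogonal_of_two_poles_general B w₁ w₂ U₁ U₂ hU₁ hU₂ hw₁ hw₂ hdisj m n b c S₁ S₂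
    hS₁ hS₂ R hres hR₁ hR₂
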